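/- There exists an absolute constant c > 0 with the following property. Let X and Y be compact convex subsets of ℝ² with nonempty interiors, and suppose t* ∈ ℝ² realizes the maximum overlap, i.e., area(X ∩ (t* + Y)) = sup_{t ∈ ℝ²} area(X ∩ (t + Y)); set M = X ∩ (t* + Y). Then there exist a rectangle r centered at the origin and a vector u ∈ ℝ² such that r ⊆ u + M ⊆ c·r. Furthermore, for every translation t ∈ ℝ², the set X ∩ (t + Y) is contained under translation in c·r. -/

import Mathlib

open MeasureTheory Pointwise

noncomputable section

abbrev Plane := EuclideanSpace ℝ (Fin 2)

/-- A rectangle centered at the origin: all points `s₁ • u + s₂ • v` with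
`|s₁| ≤ a`, `|s₂| ≤ b`, for an orthonormal pair `u, v` and positive `a, b`. -/
def IsOriginRectangle (r : Set Plane) : Prop :=
  ∃ (u v : Plane) (a b : ℝ), ‖u‖ = 1 ∧ ‖v‖ = 1 ∧ (inner ℝ u v : ℝ) = 0 ∧ 0 < a ∧ 0 < b ∧
    r = {p : Plane | ∃ s₁ s₂ : ℝ, |s₁| ≤ a ∧ |s₂| ≤ b ∧ p = s₁ • u + s₂ • v}

/-- `A` is contained under translation in `B`. -/
def ContainedUnderTranslation (A B : Set Plane) : Prop :=
  ∃ v : Plane, v +ᵥ A ⊆ B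

open Module Set
open scoped RealInnerProductSpace

/-!
Let `M` be the maximal overlap, `[p, q]` a diameter of `M` (length `d`) and `m ∈ M` a point
farthest from the line `pq` (distance `h`). Then `M` lies in a `d × 2h` box, so
`area M ≤ 2dh`, while the triangle `pqm ⊆ M` contains a rectangle `c + r` of half-sides `d/4` and
`h/4`. For a chord `[a, b]` of any overlap `X ∩ (t + Y)` and a half-side `w` of `r`, the average of
`[c - w, c + w]` and `[a, b]` is a parallelogram of area `|w × (b - a)| / 2` inside the overlap
at translation `(t* + t)/2`; maximality of `M` bounds it by `2dh`, so `b - a` lies in `64 • r`.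
-/

theorem exists_measure_inter_vadd_pos {G : Type*} [TopologicalSpace G] [AddGroup G]
    [IsTopologicalAddGroup G] [MeasurableSpace G] (μ : Measure G) [μ.IsOpenPosMeasure]
    {X Y : Set G} (hX : (interior X).Nonempty) (hY : (interior Y).Nonempty) :
    ∃ t : G, 0 < μ (X ∩ (t +ᵥ Y)) := by
  obtain ⟨x, hx⟩ := hX
  obtain ⟨y, hy⟩ := hY
  have hU : IsOpen (interior X ∩ ((x - y) +ᵥ interior Y)) :=
    isOpen_interior.inter (isOpen_interior.vadd _)
  refine ⟨x - y, (hU.measure_pos μ ⟨x, hx, y, hy, sub_add_cancel x y⟩).trans_le ?_⟩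
  exact measure_mono (inter_subset_inter interior_subset (vadd_set_mono interior_subset))

theorem IsCompact.exists_forall_dist_le {α : Type*} [PseudoMetricSpace α] {M : Set α}
    (hM : IsCompact M) (hne : M.Nonempty) :
    ∃ p ∈ M, ∃ q ∈ M, ∀ x ∈ M, ∀ y ∈ M, dist x y ≤ dist p q := by
  obtain ⟨⟨p, q⟩, ⟨hp, hq⟩, hmax⟩ :=
    (hM.prod hM).exists_isMaxOn (hne.prod hne) continuous_dist.continuousOn
  exact ⟨p, hp, q, hq, fun x hx y hy => hmax (mk_mem_prod hx hy)⟩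

theorem inner_sub_mem_Icc_of_norm_le {F : Type*} [NormedAddCommGroup F] [InnerProductSpace ℝ F]
    {p q x : F} (hxp : ‖x - p‖ ≤ ‖q - p‖) (hqx : ‖q - x‖ ≤ ‖q - p‖) :
    ⟪x - p, q - p⟫ ∈ Icc 0 (‖q - p‖ ^ 2) := by
  have hle : ∀ y : F, ‖y‖ ≤ ‖q - p‖ → ⟪y, q - p⟫ ≤ ‖q - p‖ ^ 2 := fun y hy =>
    (real_inner_le_norm y _).trans (by nlinarith [norm_nonneg y, norm_nonneg (q - p)])
  have hsum : ⟪x - p, q - p⟫ + ⟪q - x, q - p⟫ = ‖q - p‖ ^ 2 := by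
    rw [← inner_add_left, sub_add_sub_cancel', real_inner_self_eq_norm_sq]
  exact ⟨by linarith [hle _ hqx], hle _ hxp⟩

theorem Convex.midpoint_mem_inter_vadd {V : Type*} [AddCommGroup V] [Module ℝ V] {X Y : Set V}
    (hX : Convex ℝ X) (hY : Convex ℝ Y) {s t a b : V} (ha : a ∈ X ∩ (s +ᵥ Y))
    (hb : b ∈ X ∩ (t +ᵥ Y)) : midpoint ℝ a b ∈ X ∩ (midpoint ℝ s t +ᵥ Y) := by
  obtain ⟨haX, y, hy, rfl⟩ := ha
  obtain ⟨hbX, y', hy', rfl⟩ := hb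
  exact ⟨hX.midpoint_mem haX hbX, _, hY.midpoint_mem hy hy', midpoint_vadd_midpoint ..⟩

section Rectangle

variable {V : Type*} [AddCommGroup V] [Module ℝ V]

def rectangle (u v : V) (a b : ℝ) : Set V :=
  {p | ∃ s₁ s₂ : ℝ, |s₁| ≤ a ∧ |s₂| ≤ b ∧ p = s₁ • u + s₂ • v}

theorem smul_rectangle {c : ℝ} (hc : 0 < c) (u v : V) (a b : ℝ) :
    c • rectangle u v a b = rectangle u v (c * a) (c * b) := by
  ext x
  constructor
  · rintro ⟨_, ⟨s₁, s₂, h₁, h₂, rfl⟩, rfl⟩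
    refine ⟨c * s₁, c * s₂, ?_, ?_, by simp only [smul_add, smul_smul]⟩ <;>
      rw [abs_mul, abs_of_pos hc] <;> gcongr
  · rintro ⟨s₁, s₂, h₁, h₂, rfl⟩
    refine ⟨(s₁ / c) • u + (s₂ / c) • v, ⟨s₁ / c, s₂ / c, ?_, ?_, rfl⟩, ?_⟩
    · rwa [abs_div, abs_of_pos hc, div_le_iff₀' hc]
    · rwa [abs_div, abs_of_pos hc, div_le_iff₀' hc]
    · simp only [smul_add, smul_smul, mul_div_cancel₀ _ hc.ne']

theorem Convex.vadd_rectangle_subset {M : Set V} (hM : Convex ℝ M) {p u v : V} {d x₀ s : ℝ}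
    (hd : 0 < d) (hx₀ : x₀ ∈ Icc 0 d) (hp : p ∈ M) (hq : p + d • u ∈ M)
    (hm : p + x₀ • u + s • v ∈ M) :
    (p + (x₀ / 2 + d / 4) • u + (s / 4) • v) +ᵥ rectangle u v (d / 4) (|s| / 4) ⊆ M := by
  rintro _ ⟨_, ⟨s₁, s₂, hs₁, hs₂, rfl⟩, rfl⟩
  rw [abs_le] at hs₁
  have hs₂s : |s₂ / s| ≤ 1 / 4 := by
    rw [abs_div]; exact div_le_of_le_mul₀ (abs_nonneg _) (by norm_num) (by linarith)
  rw [abs_le] at hs₂s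
  set γ := 1 / 4 + s₂ / s with hγ_def
  have hγ : γ ∈ Icc 0 (1 / 2) := ⟨by linarith, by linarith⟩
  have hγs : γ * s = s / 4 + s₂ := by
    have : s = 0 → s₂ = 0 := fun h => abs_nonpos_iff.1 (by simpa [h] using hs₂)
    rw [add_mul, div_mul_cancel_of_imp this]; ring
  set l := (x₀ * (1 / 2 - γ) + d / 4 + s₁) / d
  have hld : l * d = x₀ * (1 / 2 - γ) + d / 4 + s₁ := div_mul_cancel₀ _ hd.ne'
  clear_value γ l
  have hx₀γ : x₀ * (1 / 2 - γ) ≤ d * (1 / 2 - γ) := by nlinarith [hx₀.2, hγ.2]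
  have hl : 0 ≤ l := by nlinarith [mul_nonneg hx₀.1 (sub_nonneg.2 hγ.2)]
  have hlγ : l + γ ≤ 1 := le_of_mul_le_mul_right (by nlinarith) hd
  have hmem := hM.sum_mem (t := Finset.univ) (w := ![1 - l - γ, l, γ])
    (z := ![p, p + d • u, p + x₀ • u + s • v])
    (by simp [Fin.forall_fin_succ, hl, hγ.1]; linarith) (by simp [Fin.sum_univ_three]; ring)
    (by simp [Fin.forall_fin_succ, hp, hq, hm])
  convert hmem using 1
  simp only [Fin.sum_univ_three, vadd_eq_add, Matrix.cons_val_zero, Matrix.cons_val_one,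
    Matrix.cons_val_two, Matrix.head_cons, Matrix.tail_cons]
  match_scalars
  · ring
  · linear_combination -hld
  · linear_combination -hγs

end Rectangle

section Oriented

attribute [local instance] FiniteDimensional.of_fact_finrank_eq_two

variable {E : Type*} [NormedAddCommGroup E] [InnerProductSpace ℝ E] [Fact (finrank ℝ E = 2)]
  (o : Orientation ℝ E (Fin 2))

local notation "ω" => o.areaForm
local notation "J" => o.rightAngleRotation

namespace Orientation

theorem eq_inner_smul_add_areaForm_smul {u : E} (hu : ‖u‖ = 1) (x : E) :
    x = ⟪u, x⟫ • u + ω u x • J u := by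
  refine ext_inner_right ℝ fun y => ?_
  rw [inner_add_left, real_inner_smul_left, real_inner_smul_left,
    o.inner_rightAngleRotation_left, o.inner_mul_inner_add_areaForm_mul_areaForm, hu, one_pow,
    one_mul]

theorem mem_rectangle_of_abs_le {u x : E} (hu : ‖u‖ = 1) {a b : ℝ} (ha : |⟪u, x⟫| ≤ a)
    (hb : |ω u x| ≤ b) : x ∈ rectangle u (J u) a b :=
  ⟨_, _, ha, hb, o.eq_inner_smul_add_areaForm_smul hu x⟩

variable [MeasurableSpace E] [BorelSpace E]

theorem volume_parallelepiped (x y : E) :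
    volume (parallelepiped ![x, y]) = ENNReal.ofReal |ω x y| := by
  rw [← o.measure_eq_volume, AlternatingMap.measure_parallelepiped, o.areaForm_to_volumeForm]

theorem volume_le_of_forall_mem_box {M : Set E} {p u : E} {d h : ℝ} (hu : ‖u‖ = 1)
    (hM : ∀ x ∈ M, ⟪u, x - p⟫ ∈ Icc 0 d ∧ |ω u (x - p)| ≤ h) :
    volume M ≤ ENNReal.ofReal (2 * d * h) := by
  rcases M.eq_empty_or_nonempty with rfl | ⟨x, hx⟩
  · simp
  have hd : 0 ≤ d := (hM x hx).1.1.trans (hM x hx).1.2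
  have hh : 0 ≤ h := (abs_nonneg _).trans (hM x hx).2
  calc volume M ≤ volume ((p - h • J u) +ᵥ parallelepiped ![d • u, (2 * h) • J u]) := by
        refine measure_mono fun x hx => ⟨x - (p - h • J u), ?_, add_sub_cancel _ x⟩
        obtain ⟨⟨hx0, hxd⟩, hxh⟩ := hM x hx
        rw [abs_le] at hxh
        rw [mem_parallelepiped_iff]
        -- if `d` or `h` vanishes, the division gives `0`, which is still a valid coordinate
        refine ⟨![⟪u, x - p⟫ / d, (ω u (x - p) + h) / (2 * h)], ?_, ?_⟩
        · simp only [mem_Icc, Pi.le_def, Fin.forall_fin_two, Matrix.cons_val_zero,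
            Matrix.cons_val_one, Pi.zero_apply, Pi.one_apply]
          exact ⟨⟨div_nonneg hx0 hd, div_nonneg (by linarith) (by linarith)⟩,
            div_le_one_of_le₀ hxd hd, div_le_one_of_le₀ (by linarith) (by linarith)⟩
        · have hd' : d = 0 → ⟪u, x - p⟫ = 0 := fun h0 => by linarith
          have hh' : 2 * h = 0 → ω u (x - p) + h = 0 := fun h0 => by linarith
          simp only [Fin.sum_univ_two, Matrix.cons_val_zero, Matrix.cons_val_one, smul_smul,
            div_mul_cancel_of_imp hd', div_mul_cancel_of_imp hh']
          linear_combination (norm := module) o.eq_inner_smul_add_areaForm_smul hu (x - p)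
    _ = ENNReal.ofReal (2 * d * h) := by
        rw [measure_vadd, o.volume_parallelepiped]
        simp only [map_smul, LinearMap.smul_apply, o.areaForm_rightAngleRotation_right,
          real_inner_self_eq_norm_sq, hu, smul_eq_mul]
        rw [abs_of_nonneg (by positivity)]
        congr 1
        ring

/-- By convexity, the average of the chord `[c - w, c + w]` of one overlap and the chord `[a, b]`
of another is a parallelogram inside the overlap at the average translation. -/
theorem ofReal_abs_areaForm_le_volume_inter_vadd {X Y : Set E} (hX : Convex ℝ X)
    (hY : Convex ℝ Y) {s t c w a b : E} (hcw : c - w ∈ X ∩ (s +ᵥ Y)) (hcw' : c + w ∈ X ∩ (s +ᵥ Y))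
    (ha : a ∈ X ∩ (t +ᵥ Y)) (hb : b ∈ X ∩ (t +ᵥ Y)) :
    ENNReal.ofReal (|ω w (b - a)| / 2) ≤ volume (X ∩ (midpoint ℝ s t +ᵥ Y)) := by
  calc ENNReal.ofReal (|ω w (b - a)| / 2)
      = volume (midpoint ℝ (c - w) a +ᵥ parallelepiped ![w, (2 : ℝ)⁻¹ • (b - a)]) := by
        rw [measure_vadd, o.volume_parallelepiped]
        simp only [map_smul, smul_eq_mul, abs_mul, abs_inv, abs_two]
        congr 1
        ring
    _ ≤ volume (X ∩ (midpoint ℝ s t +ᵥ Y)) := by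
        refine measure_mono ?_
        rintro _ ⟨_, hx, rfl⟩
        obtain ⟨τ, ⟨h0, h1⟩, rfl⟩ := (mem_parallelepiped_iff _ _).1 hx
        convert hX.midpoint_mem_inter_vadd hY
          ((hX.inter (hY.vadd s)).add_smul_sub_mem hcw hcw' ⟨h0 0, h1 0⟩)
          ((hX.inter (hY.vadd t)).add_smul_sub_mem ha hb ⟨h0 1, h1 1⟩) using 1
        simp only [Fin.sum_univ_two, Matrix.cons_val_zero, Matrix.cons_val_one,
          midpoint_eq_smul_add, invOf_eq_inv, vadd_eq_add]
        module

theorem exists_vadd_rectangle_subset_volume_le {M : Set E} (hMc : IsCompact M) (hMconv : Convex ℝ M)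
    (hpos : 0 < volume M) :
    ∃ (c u : E) (A B : ℝ), ‖u‖ = 1 ∧ 0 < A ∧ 0 < B ∧ c +ᵥ rectangle u (J u) A B ⊆ M ∧
      volume M ≤ ENNReal.ofReal (32 * A * B) := by
  have hne : M.Nonempty := nonempty_of_measure_ne_zero hpos.ne'
  obtain ⟨p, hp, q, hq, hdiam⟩ := hMc.exists_forall_dist_le hne
  have hqp : q - p ≠ 0 := by
    have : Nontrivial E := Module.nontrivial_of_finrank_eq_succ (Fact.out : finrank ℝ E = 2)
    refine sub_ne_zero.2 fun hpq => hpos.ne' (Set.Subsingleton.measure_zero ?_ _)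
    exact fun x hx y hy => dist_le_zero.1 (by simpa [hpq] using hdiam x hx y hy)
  set d := ‖q - p‖
  have hd : 0 < d := norm_pos_iff.2 hqp
  set u := d⁻¹ • (q - p)
  have hu : ‖u‖ = 1 := norm_smul_inv_norm hqp
  have hq' : q = p + d • u := by simp [u, smul_inv_smul₀ hd.ne']
  have hslab : ∀ x ∈ M, ⟪u, x - p⟫ ∈ Icc 0 d := by
    intro x hx
    obtain ⟨h0, hd2⟩ := inner_sub_mem_Icc_of_norm_le (p := p) (q := q) (x := x)
      (by simpa [dist_eq_norm, norm_sub_rev q p] using hdiam x hx p hp)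
      (by simpa [dist_eq_norm, norm_sub_rev q p] using hdiam q hq x hx)
    rw [real_inner_smul_left, real_inner_comm]
    exact ⟨mul_nonneg (inv_nonneg.2 hd.le) h0, (inv_mul_le_iff₀ hd).2 (by nlinarith)⟩
  obtain ⟨m, hm, hmmax⟩ := hMc.exists_isMaxOn hne (f := fun x => |ω u (x - p)|) (by fun_prop)
  set s := ω u (m - p)
  have hvol : volume M ≤ ENNReal.ofReal (2 * d * |s|) :=
    o.volume_le_of_forall_mem_box hu fun x hx => ⟨hslab x hx, hmmax hx⟩
  have hs : 0 < |s| :=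
    pos_of_mul_pos_right (ENNReal.ofReal_pos.1 (hpos.trans_le hvol)) (by positivity)
  refine ⟨p + (⟪u, m - p⟫ / 2 + d / 4) • u + (s / 4) • J u, u, d / 4, |s| / 4, hu,
    by positivity, by positivity, ?_, ?_⟩
  · refine hMconv.vadd_rectangle_subset hd (hslab m hm) hp (hq' ▸ hq) ?_
    rwa [add_assoc, ← o.eq_inner_smul_add_areaForm_smul hu, add_sub_cancel]
  · convert hvol using 2
    ring

theorem sub_mem_rectangle_of_forall_volume_le {X Y : Set E} (hX : Convex ℝ X) (hY : Convex ℝ Y)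
    {s : E} (hmax : ∀ t : E, volume (X ∩ (t +ᵥ Y)) ≤ volume (X ∩ (s +ᵥ Y))) {c u : E} {A B K : ℝ}
    (hu : ‖u‖ = 1) (hA : 0 < A) (hB : 0 < B) (hK : 0 ≤ K)
    (hrect : c +ᵥ rectangle u (J u) A B ⊆ X ∩ (s +ᵥ Y))
    (hvol : volume (X ∩ (s +ᵥ Y)) ≤ ENNReal.ofReal (K * A * B)) {t a b : E}
    (ha : a ∈ X ∩ (t +ᵥ Y)) (hb : b ∈ X ∩ (t +ᵥ Y)) :
    b - a ∈ rectangle u (J u) (2 * K * A) (2 * K * B) := by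
  have hchord : ∀ w, c - w ∈ X ∩ (s +ᵥ Y) → c + w ∈ X ∩ (s +ᵥ Y) →
      |ω w (b - a)| ≤ 2 * (K * A * B) := fun w hw hw' => by
    have := (o.ofReal_abs_areaForm_le_volume_inter_vadd hX hY hw hw' ha hb).trans
      ((hmax _).trans hvol)
    rw [ENNReal.ofReal_le_ofReal_iff (by positivity)] at this
    linarith
  have hmem : ∀ s₁ s₂ : ℝ, |s₁| ≤ A → |s₂| ≤ B → c + (s₁ • u + s₂ • J u) ∈ X ∩ (s +ᵥ Y) :=
    fun s₁ s₂ h₁ h₂ => hrect ⟨_, ⟨s₁, s₂, h₁, h₂, rfl⟩, rfl⟩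
  have hA₀ : |(0 : ℝ)| ≤ A := by simpa using hA.le
  have hB₀ : |(0 : ℝ)| ≤ B := by simpa using hB.le
  have hA' : |A| ≤ A := (abs_of_pos hA).le
  have hB' : |B| ≤ B := (abs_of_pos hB).le
  have hAu := hchord (A • u) (by simpa [sub_eq_add_neg] using hmem (-A) 0 (by rwa [abs_neg]) hB₀)
    (by simpa using hmem A 0 hA' hB₀)
  have hBv := hchord (B • J u) (by simpa [sub_eq_add_neg] using hmem 0 (-B) hA₀ (by rwa [abs_neg]))
    (by simpa using hmem 0 B hA₀ hB')
  simp only [map_smul, LinearMap.smul_apply, o.areaForm_rightAngleRotation_left, smul_eq_mul,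
    abs_mul, abs_neg, abs_of_pos hA, abs_of_pos hB] at hAu hBv
  apply o.mem_rectangle_of_abs_le hu <;> nlinarith

end Orientation

end Oriented

instance : Fact (finrank ℝ Plane = 2) := ⟨finrank_euclideanSpace_fin⟩

theorem Orientation.isOriginRectangle_rectangle (o : Orientation ℝ Plane (Fin 2)) {u : Plane}
    (hu : ‖u‖ = 1) {a b : ℝ} (ha : 0 < a) (hb : 0 < b) :
    IsOriginRectangle (rectangle u (o.rightAngleRotation u) a b) :=
  ⟨u, _, a, b, hu, by simpa using hu, by rw [real_inner_comm, o.inner_rightAngleRotation_self],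
    ha, hb, rfl⟩

theorem const_approx_by_rect :
    ∃ c : ℝ, 0 < c ∧
      ∀ X Y : Set Plane,
        IsCompact X → Convex ℝ X → (interior X).Nonempty →
        IsCompact Y → Convex ℝ Y → (interior Y).Nonempty →
        ∀ tstar : Plane,
          volume (X ∩ (tstar +ᵥ Y)) = ⨆ t : Plane, volume (X ∩ (t +ᵥ Y)) →
          ∃ (r : Set Plane) (u : Plane), IsOriginRectangle r ∧
            r ⊆ u +ᵥ (X ∩ (tstar +ᵥ Y)) ∧
            u +ᵥ (X ∩ (tstar +ᵥ Y)) ⊆ c • r ∧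
            ∀ t : Plane, ContainedUnderTranslation (X ∩ (t +ᵥ Y)) (c • r) := by
  let o : Orientation ℝ Plane (Fin 2) := (EuclideanSpace.basisFun (Fin 2) ℝ).toBasis.orientation
  refine ⟨2 * 32, by norm_num, fun X Y hXc hXconv hXint hYc hYconv hYint tstar hsup => ?_⟩
  set M := X ∩ (tstar +ᵥ Y)
  have hmax : ∀ t : Plane, volume (X ∩ (t +ᵥ Y)) ≤ volume M :=
    fun t => hsup ▸ le_iSup (fun t => volume (X ∩ (t +ᵥ Y))) t
  obtain ⟨t₀, ht₀⟩ := exists_measure_inter_vadd_pos volume hXint hYint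
  obtain ⟨c, u, A, B, hu, hA, hB, hrect, hvol⟩ := o.exists_vadd_rectangle_subset_volume_le
    (hXc.inter_right (hYc.vadd tstar).isClosed) (hXconv.inter (hYconv.vadd tstar))
    (ht₀.trans_le (hmax t₀))
  have hchord : ∀ t, ∀ a ∈ X ∩ (t +ᵥ Y), ∀ b ∈ X ∩ (t +ᵥ Y),
      -a +ᵥ b ∈ (2 * 32 : ℝ) • rectangle u (o.rightAngleRotation u) A B := fun t a ha b hb => by
    rw [smul_rectangle (by norm_num), vadd_eq_add, neg_add_eq_sub]
    exact o.sub_mem_rectangle_of_forall_volume_le hXconv hYconv hmax hu hA hB (by norm_num) hrect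
      hvol ha hb
  have hc : c ∈ M := hrect ⟨0, ⟨0, 0, by simpa using hA.le, by simpa using hB.le, by simp⟩, by simp⟩
  refine ⟨_, -c, o.isOriginRectangle_rectangle hu hA hB, ?_, ?_, fun t => ?_⟩
  · rintro x hx
    exact ⟨c +ᵥ x, hrect (vadd_mem_vadd_set hx), by simp⟩
  · rintro _ ⟨x, hx, rfl⟩
    exact hchord tstar c hc x hx
  · rcases (X ∩ (t +ᵥ Y)).eq_empty_or_nonempty with h | ⟨a, ha⟩
    · exact ⟨0, by simp [h]⟩
    · exact ⟨-a, by rintro _ ⟨x, hx, rfl⟩; exact hchord t a ha x hx⟩
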